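/- arXiv:1604.01542 — 5 statements merged into one kernel-verified Lean document; each statement's English description precedes it below -/
import Mathlib

section
/- Let E be a finite-dimensional real normed vector space, let N ≥ 2, and let G_1, …, G_N be nonempty closed subsets of E. Define r(x) = max_{1 ≤ k ≤ N} d(x, G_k), where d(x, S) = inf_{y ∈ S} ‖x − y‖. Suppose x* ∈ E is a global minimizer of r over E. Then the maximum is attained by at least two indices at x*: there exist j ≠ k with d(x*, G_j) = r(x*) and d(x*, G_k) = r(x*). -/
/-!
If only one index `j` attained the maximum at `x*`, the other distances would stay below the
maximum on a neighbourhood of `x*`, so `x*` would be a local minimum of `d(·, G j)`. But a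
positive distance to a set is never locally minimal in a normed space: moving from `x*` a small
fraction of the way towards an almost-nearest point of the set strictly decreases it.
-/

open Filter Topology Metric

theorem Metric.exists_dist_lt_infDist_lt {E : Type*} [SeminormedAddCommGroup E]
    [NormedSpace ℝ E] {S : Set E} {x : E} (hS : 0 < infDist x S) {ε : ℝ} (hε : 0 < ε) :
    ∃ x', dist x' x < ε ∧ infDist x' S < infDist x S := by
  have hSne : S.Nonempty := Set.nonempty_iff_ne_empty.2 fun hSe => hS.ne' (hSe ▸ infDist_empty)
  set r := infDist x S
  obtain ⟨y, hyS, hxy⟩ : ∃ y ∈ S, dist x y < r + ε := (infDist_lt_iff hSne).1 (by linarith)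
  -- the step `t` is chosen so that `t * (r + ε) = ε` and `(1 - t) * (r + ε) = r`
  set t : ℝ := ε / (r + ε)
  have ht₀ : 0 < t := by positivity
  have ht₁ : t < 1 := (div_lt_one (by positivity)).2 (by linarith)
  have hstep : t * (r + ε) = ε := div_mul_cancel₀ _ (by positivity)
  refine ⟨AffineMap.lineMap x y t, ?_, ?_⟩
  · calc dist (AffineMap.lineMap x y t) x = t * dist x y := by
          rw [dist_lineMap_left, Real.norm_of_nonneg ht₀.le]
      _ < t * (r + ε) := by gcongr
      _ = ε := hstep
  · calc infDist (AffineMap.lineMap x y t) S ≤ dist (AffineMap.lineMap x y t) y :=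
          infDist_le_dist_of_mem hyS
      _ = (1 - t) * dist x y := by
          rw [dist_lineMap_right, Real.norm_of_nonneg (by linarith)]
      _ < (1 - t) * (r + ε) := by gcongr
      _ = r := by linear_combination -hstep

theorem Metric.not_isLocalMin_infDist {E : Type*} [SeminormedAddCommGroup E] [NormedSpace ℝ E]
    {S : Set E} {x : E} (hS : 0 < infDist x S) : ¬IsLocalMin (infDist · S) x := by
  intro hmin
  obtain ⟨ε, hε, hball⟩ := Metric.eventually_nhds_iff.1 hmin
  obtain ⟨x', hx'x, hx'S⟩ := exists_dist_lt_infDist_lt hS hε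
  exact (hball hx'x).not_gt hx'S

theorem isLocalMin_of_forall_iSup_le_of_forall_lt {ι X : Type*} [Finite ι] [TopologicalSpace X]
    {f : ι → X → ℝ} (hf : ∀ i, Continuous (f i)) {x : X}
    (hmin : ∀ y, ⨆ i, f i x ≤ ⨆ i, f i y) {j : ι} (hj : ∀ i ≠ j, f i x < f j x) :
    IsLocalMin (f j) x := by
  have : Nonempty ι := ⟨j⟩
  have hothers : ∀ᶠ y in 𝓝 x, ∀ i ≠ j, f i y < f j x := by
    simp only [eventually_all]
    exact fun i hi => (hf i).continuousAt.eventually_lt continuousAt_const (hj i hi)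
  filter_upwards [hothers] with y hy
  obtain ⟨i, hi⟩ := exists_eq_ciSup_of_finite (f := fun i => f i y)
  have hjx : f j x ≤ f i y := (le_ciSup (Set.finite_range _).bddAbove j).trans (hi ▸ hmin y)
  rcases eq_or_ne i j with rfl | hij
  exacts [hjx, (hjx.not_gt (hy i hij)).elim]

theorem stmt1_general {E : Type*} [NormedAddCommGroup E] [NormedSpace ℝ E]
    {N : ℕ} (hN : 2 ≤ N) (G : Fin N → Set E)
    (xs : E) (hopt : ∀ x : E, (⨆ k, Metric.infDist xs (G k)) ≤ ⨆ k, Metric.infDist x (G k)) :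
    ∃ j k : Fin N, j ≠ k ∧
      Metric.infDist xs (G j) = (⨆ i, Metric.infDist xs (G i)) ∧
      Metric.infDist xs (G k) = (⨆ i, Metric.infDist xs (G i)) := by
  have : Nontrivial (Fin N) := Fin.nontrivial_iff_two_le.2 hN
  obtain ⟨j, hj⟩ := exists_eq_ciSup_of_finite (f := fun i => infDist xs (G i))
  by_contra! hunique
  have hlt : ∀ k ≠ j, infDist xs (G k) < infDist xs (G j) := fun k hk =>
    (le_ciSup (Set.finite_range _).bddAbove k).trans_eq hj.symm |>.lt_of_ne
      (hj ▸ hunique j k hk.symm hj)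
  have hmin : IsLocalMin (infDist · (G j)) xs :=
    isLocalMin_of_forall_iSup_le_of_forall_lt (fun _ => continuous_infDist_pt _) hopt hlt
  obtain ⟨k, hk⟩ := exists_ne j
  exact not_isLocalMin_infDist (infDist_nonneg.trans_lt (hlt k hk)) hmin

/-- In a finite-dimensional real normed space, if `x*` globally minimizes
`x ↦ max_{1 ≤ k ≤ N} d(x, G k)` for `N ≥ 2` nonempty closed sets `G k`, then at least two
indices attain the maximum at `x*`. -/
theorem stmt1 {E : Type*} [NormedAddCommGroup E] [NormedSpace ℝ E] [FiniteDimensional ℝ E]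
    {N : ℕ} (hN : 2 ≤ N) (G : Fin N → Set E)
    (hne : ∀ k, (G k).Nonempty) (hcl : ∀ k, IsClosed (G k))
    (xs : E) (hopt : ∀ x : E, (⨆ k, Metric.infDist xs (G k)) ≤ ⨆ k, Metric.infDist x (G k)) :
    ∃ j k : Fin N, j ≠ k ∧
      Metric.infDist xs (G j) = (⨆ i, Metric.infDist xs (G i)) ∧
      Metric.infDist xs (G k) = (⨆ i, Metric.infDist xs (G i)) :=
  stmt1_general hN G xs hopt
end

section
/- Consider an uncertain optimization problem given by a scenario space Ξ, a set X ⊆ M where (M, d) is a metric space, an objective f : M → Ξ → ℝ, and constraints F : M → Ξ → ℝ^m. For U ⊆ Ξ, a pair (x, y) with x ∈ X and y : Ξ → M is feasible for Rec(U) if for every ξ ∈ U one has y(ξ) ∈ X and F(y(ξ), ξ) ≤ 0 componentwise; its objectives are fObj_U(y) = sup_{ξ ∈ U} f(y(ξ), ξ) and rObj_U(x, y) = sup_{ξ ∈ U} d(x, y(ξ)), suprema taken in the extended reals. A feasible pair (x, y) is Pareto efficient for Rec(U) if there is no feasible pair (x', y') with fObj_U(y') ≤ fObj_U(y) and rObj_U(x',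 y') ≤ rObj_U(x, y) and at least one inequality strict; x is recoverable-robust with respect to U if there exists y such that (x, y) is Pareto efficient for Rec(U). Let U' ⊆ U. Assume: for every pair (x, y') feasible for Rec(U') there exists y : Ξ → M such that (x, y) is feasible for Rec(U), fObj_U(y) = fObj_{U'}(y'), and rObj_U(x, y) = rObj_{U'}(x, y'). Then a point x ∈ X is recoverable-robust with respect to U if and only if it is recoverable-robust with respect to U'. -/
/-! A feasible pair is dominated exactly when its objective vector `(fObj, rObj)` is strictly
smaller in the product order on `EReal × EReal`. Passing from `U` to `U' ⊆ U` keeps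
feasibility and can only lower the objective vector, while the extension hypothesis lifts every
`Rec(U')`-feasible pair to a `Rec(U)`-feasible one with the same objective vector. Hence a pair
dominating a candidate in one problem yields a dominating pair in the other. -/

section

variable {M Ξ : Type*} [MetricSpace M] {m : ℕ}

/-- `(x, y)` is feasible for `Rec(U)`: `x ∈ X`, and for every scenario `ξ ∈ U` the recovery
solution `y ξ` lies in `X` and satisfies all constraints `F i (y ξ) ξ ≤ 0`. -/
def RecFeasible (X : Set M) (F : M → Ξ → Fin m → ℝ) (U : Set Ξ) (x : M) (y : Ξ → M) : Prop :=
  x ∈ X ∧ ∀ ξ ∈ U, y ξ ∈ X ∧ ∀ i, F (y ξ) ξ i ≤ 0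

/-- Worst-case objective value `fObj_U(y) = sup_{ξ ∈ U} f (y ξ) ξ`, in the extended reals. -/
noncomputable def fObj (f : M → Ξ → ℝ) (U : Set Ξ) (y : Ξ → M) : EReal :=
  ⨆ ξ ∈ U, (f (y ξ) ξ : EReal)

/-- Worst-case recovery cost `rObj_U(x, y) = sup_{ξ ∈ U} d(x, y ξ)`, in the extended reals. -/
noncomputable def rObj (U : Set Ξ) (x : M) (y : Ξ → M) : EReal :=
  ⨆ ξ ∈ U, (dist x (y ξ) : EReal)

/-- `(x, y)` is Pareto efficient for `Rec(U)`: it is feasible, and no feasible pair weakly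
improves both objectives with at least one strict improvement. -/
def ParetoEfficient (X : Set M) (f : M → Ξ → ℝ) (F : M → Ξ → Fin m → ℝ) (U : Set Ξ)
    (x : M) (y : Ξ → M) : Prop :=
  RecFeasible X F U x y ∧
    ¬ ∃ x' y', RecFeasible X F U x' y' ∧
      fObj f U y' ≤ fObj f U y ∧ rObj U x' y' ≤ rObj U x y ∧
      (fObj f U y' < fObj f U y ∨ rObj U x' y' < rObj U x y)

/-- `x` is recoverable-robust with respect to `U` if some `y` makes `(x, y)` Pareto
efficient for `Rec(U)`. -/
def RecoverableRobust (X : Set M) (f : M → Ξ → ℝ) (F : M → Ξ → Fin m → ℝ) (U : Set Ξ)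
    (x : M) : Prop :=
  ∃ y : Ξ → M, ParetoEfficient X f F U x y

end

theorem RecFeasible.mono {M Ξ : Type*} {m : ℕ} {X : Set M} {F : M → Ξ → Fin m → ℝ}
    {U U' : Set Ξ} {x : M} {y : Ξ → M} (hsub : U' ⊆ U) (h : RecFeasible X F U x y) :
    RecFeasible X F U' x y :=
  ⟨h.1, fun ξ hξ => h.2 ξ (hsub hξ)⟩

section

variable {M Ξ : Type*} [MetricSpace M] {m : ℕ}

section Reduction

variable {X : Set M} {f : M → Ξ → ℝ} {F : M → Ξ → Fin m → ℝ} {U U' : Set Ξ}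
  {x : M} {y y' : Ξ → M}

noncomputable def recObj (f : M → Ξ → ℝ) (U : Set Ξ) (x : M) (y : Ξ → M) : EReal × EReal :=
  (fObj f U y, rObj U x y)

theorem recObj_mono (hsub : U' ⊆ U) : recObj f U' x y ≤ recObj f U x y :=
  ⟨biSup_mono fun _ hξ => hsub hξ, biSup_mono fun _ hξ => hsub hξ⟩

theorem paretoEfficient_iff :
    ParetoEfficient X f F U x y ↔ RecFeasible X F U x y ∧
      ∀ x' y', RecFeasible X F U x' y' → ¬ recObj f U x' y' < recObj f U x y := by
  simp only [ParetoEfficient, recObj, Prod.lt_iff, not_exists, not_and]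
  grind

theorem ParetoEfficient.of_superset (hsub : U' ⊆ U)
    (hext : ∀ x' y', RecFeasible X F U' x' y' →
      ∃ y, RecFeasible X F U x' y ∧ recObj f U x' y = recObj f U' x' y')
    (h : ParetoEfficient X f F U x y) : ParetoEfficient X f F U' x y := by
  rw [paretoEfficient_iff] at h ⊢
  refine ⟨h.1.mono hsub, fun x' y' hfeas' hlt => ?_⟩
  obtain ⟨y'', hfeas'', hobj⟩ := hext x' y' hfeas'
  exact h.2 x' y'' hfeas'' (hobj ▸ hlt.trans_le (recObj_mono hsub))

theorem ParetoEfficient.of_subset (hsub : U' ⊆ U) (hy : RecFeasible X F U x y)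
    (hobj : recObj f U x y = recObj f U' x y') (h : ParetoEfficient X f F U' x y') :
    ParetoEfficient X f F U x y := by
  rw [paretoEfficient_iff] at h ⊢
  refine ⟨hy, fun x'' y'' hfeas'' hlt => ?_⟩
  exact h.2 x'' y'' (hfeas''.mono hsub) ((recObj_mono hsub).trans_lt (hobj ▸ hlt))

end Reduction

theorem stmt4 (X : Set M) (f : M → Ξ → ℝ) (F : M → Ξ → Fin m → ℝ)
    (U U' : Set Ξ) (hsub : U' ⊆ U)
    (hext : ∀ x y', RecFeasible X F U' x y' →
      ∃ y : Ξ → M, RecFeasible X F U x y ∧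
        fObj f U y = fObj f U' y' ∧ rObj U x y = rObj U' x y') :
    ∀ x ∈ X, (RecoverableRobust X f F U x ↔ RecoverableRobust X f F U' x) := by
  have hext' : ∀ x y', RecFeasible X F U' x y' →
      ∃ y, RecFeasible X F U x y ∧ recObj f U x y = recObj f U' x y' := fun x y' h' =>
    (hext x y' h').imp fun _ ⟨hfeas, hf, hr⟩ => ⟨hfeas, Prod.ext hf hr⟩
  intro x _
  constructor
  · rintro ⟨y, hy⟩
    exact ⟨y, hy.of_superset hsub hext'⟩
  · rintro ⟨y', hy'⟩
    obtain ⟨y, hfeas, hobj⟩ := hext' x y' hy'.1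
    exact ⟨y, hy'.of_subset hsub hfeas hobj⟩

end
end

section
/- Consider an uncertain optimization problem with feasible ground set X contained in a metric space (M, d), objective f : M → Ξ → ℝ, constraints F : M → Ξ → ℝ^m, and uncertainty set U ⊆ Ξ. Let SR(U) = {x ∈ X : F(x, ξ) ≤ 0 componentwise for all ξ ∈ U} be the set of strictly robust solutions. Suppose x̄ is an optimal solution of the strictly robust counterpart RC(U), i.e. x̄ ∈ SR(U) and sup_{ξ ∈ U} f(x̄, ξ) ≤ sup_{ξ ∈ U} f(x, ξ) for all x ∈ SR(U). Define ȳ : Ξ → M by ȳ(ξ) = x̄ for all ξ. Then (x̄, ȳ) is a lexicographically minimal feasible solution of Rec(U) with respect to the order (rObj, fObj): (x̄, ȳ) is feasible for Rec(U), and for every feasible pair (x, y) of Rec(U), either rObj_U(x, y) > rObj_U(x̄, ȳ), or rObj_U(x, y) = rObj_U(x̄, ȳ) and fObj_U(y) ≥ fObj_U(ȳ). -/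
/-! **Statement 8.** If `x̄` optimally solves the strictly robust counterpart `RC(U)`, then the
pair `(x̄, ȳ)` with `ȳ(ξ) = x̄` for all `ξ` is a lexicographically minimal feasible solution of
`Rec(U)` with respect to the order `(rObj, fObj)`. -/

section

variable {M Ξ : Type*} [MetricSpace M] {m : ℕ}

/-- The set of strictly robust solutions `SR(U)`. -/
def StrictlyRobust (X : Set M) (F : M → Ξ → Fin m → ℝ) (U : Set Ξ) : Set M :=
  {x ∈ X | ∀ ξ ∈ U, ∀ i, F x ξ i ≤ 0}

end

section

variable {M Ξ : Type*} {m : ℕ}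

lemma fObj_of_eqOn (f : M → Ξ → ℝ) {U : Set Ξ} {x : M} {y : Ξ → M} (hy : ∀ ξ ∈ U, y ξ = x) :
    fObj f U y = ⨆ ξ ∈ U, (f x ξ : EReal) :=
  biSup_congr fun ξ hξ => by rw [hy ξ hξ]

lemma recFeasible_const {X : Set M} {F : M → Ξ → Fin m → ℝ} {U : Set Ξ} {x : M}
    (hx : x ∈ StrictlyRobust X F U) : RecFeasible X F U x fun _ => x :=
  ⟨hx.1, fun ξ hξ => ⟨hx.1, hx.2 ξ hξ⟩⟩

lemma RecFeasible.mem_strictlyRobust {X : Set M} {F : M → Ξ → Fin m → ℝ} {U : Set Ξ} {x : M}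
    {y : Ξ → M} (h : RecFeasible X F U x y) (hy : ∀ ξ ∈ U, y ξ = x) :
    x ∈ StrictlyRobust X F U :=
  ⟨h.1, fun ξ hξ => hy ξ hξ ▸ (h.2 ξ hξ).2⟩

end

section

variable {M Ξ : Type*} [MetricSpace M] {m : ℕ}

lemma rObj_le_zero_iff {U : Set Ξ} {x : M} {y : Ξ → M} :
    rObj U x y ≤ 0 ↔ ∀ ξ ∈ U, y ξ = x := by
  simp only [rObj, iSup₂_le_iff, EReal.coe_nonpos, dist_le_zero, eq_comm]

lemma rObj_le_of_eqOn {U : Set Ξ} {x x' : M} {y y' : Ξ → M} (hy : ∀ ξ ∈ U, y ξ = x) :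
    rObj U x y ≤ rObj U x' y' :=
  iSup₂_le fun ξ hξ => by
    rw [hy ξ hξ, dist_self]
    exact (EReal.coe_nonneg.2 dist_nonneg).trans
      (le_iSup₂ (f := fun ξ _ => ((dist x' (y' ξ) : ℝ) : EReal)) ξ hξ)

theorem stmt8 (X : Set M) (f : M → Ξ → ℝ) (F : M → Ξ → Fin m → ℝ) (U : Set Ξ)
    (xbar : M) (hfeas : xbar ∈ StrictlyRobust X F U)
    (hopt : ∀ x ∈ StrictlyRobust X F U,
      (⨆ ξ ∈ U, (f xbar ξ : EReal)) ≤ ⨆ ξ ∈ U, (f x ξ : EReal))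
    (ybar : Ξ → M) (hybar : ∀ ξ, ybar ξ = xbar) :
    RecFeasible X F U xbar ybar ∧
      ∀ x y, RecFeasible X F U x y →
        rObj U xbar ybar < rObj U x y ∨
          (rObj U x y = rObj U xbar ybar ∧ fObj f U ybar ≤ fObj f U y) := by
  obtain rfl : ybar = fun _ => xbar := funext hybar
  refine ⟨recFeasible_const hfeas, fun x y hxy => ?_⟩
  have hconst : ∀ ξ ∈ U, (fun _ => xbar) ξ = xbar := fun _ _ => rfl
  rcases (rObj_le_of_eqOn (x' := x) (y' := y) hconst).lt_or_eq with hlt | heq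
  · exact Or.inl hlt
  -- A tie in recovery cost forces zero recovery, so `x` itself is strictly robust.
  have hy : ∀ ξ ∈ U, y ξ = x := rObj_le_zero_iff.1 (heq ▸ rObj_le_zero_iff.2 hconst)
  refine Or.inr ⟨heq.symm, ?_⟩
  rw [fObj_of_eqOn f hconst, fObj_of_eqOn f hy]
  exact hopt x (hxy.mem_strictlyRobust hy)

end
end

section
/- Let F₋ = {(x₁, x₂) ∈ ℝ² : x₁x₂ ≤ −1, x₁ ≤ 0, x₂ ≥ 0} and F₊ = {(x₁, x₂) ∈ ℝ² : x₁x₂ ≥ 1, x₁ ≥ 0, x₂ ≥ 0}, and let ‖·‖ denote the Euclidean norm on ℝ². Then for every x ∈ ℝ² and every y₋ ∈ F₋, y₊ ∈ F₊, there exist x' ∈ ℝ² and y'₋ ∈ F₋, y'₊ ∈ F₊ such that max(|(y'₋)₁|, |(y'₊)₁|) < max(|(y₋)₁|, |(y₊)₁|) and max(‖x' − y'₋‖, ‖x' − y'₊‖) < max(‖x − y₋‖, ‖x − y₊‖). In particular, the biobjective problem of minimizing (max(|(y₋)₁|, |(y₊)₁|), max(‖x − y₋‖, ‖x − y₊‖))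 over x ∈ ℝ², y₋ ∈ F₋, y₊ ∈ F₊ has no (weakly) Pareto efficient solution. -/
/-! **Statement 16.** For the two feasible sets
`F₋ = {x₁x₂ ≤ −1, x₁ ≤ 0, x₂ ≥ 0}` and `F₊ = {x₁x₂ ≥ 1, x₁ ≥ 0, x₂ ≥ 0}` in the Euclidean
plane, every solution `(x, y₋, y₊)` of the biobjective recoverable-robust problem can be
strictly improved in both objectives simultaneously; in particular no (weakly) Pareto
efficient solution exists. -/

/-- The feasible set of scenario `ξ = −1`. -/
def Fneg : Set (EuclideanSpace ℝ (Fin 2)) :=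
  {p | p 0 * p 1 ≤ -1 ∧ p 0 ≤ 0 ∧ 0 ≤ p 1}

/-- The feasible set of scenario `ξ = 1`. -/
def Fpos : Set (EuclideanSpace ℝ (Fin 2)) :=
  {p | 1 ≤ p 0 * p 1 ∧ 0 ≤ p 0 ∧ 0 ≤ p 1}

/-! Both objectives are positive at every feasible solution: `y₊` has positive first
coordinate, and `y₋ ≠ y₊` because `F₋` and `F₊` are disjoint. But for every `ε > 0` the points
`(∓ε, 1/ε)` on the hyperbola branches, recovered from `x = (0, 1/ε)`, give the value `ε` in
both objectives, and `ε` can be taken below both current values. -/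

lemma norm_sub_of_eq_snd (a b c : ℝ) : ‖!₂[a, c] - !₂[b, c]‖ = |a - b| := by
  rw [EuclideanSpace.norm_eq, Fin.sum_univ_two]
  simp [Real.sqrt_sq_eq_abs]

lemma pos_of_mem_Fpos {p : EuclideanSpace ℝ (Fin 2)} (hp : p ∈ Fpos) : 0 < p 0 :=
  pos_of_mul_pos_left (one_pos.trans_le hp.1) hp.2.2

lemma disjoint_Fneg_Fpos : Disjoint Fneg Fpos :=
  Set.disjoint_left.mpr fun _ hm hp => (pos_of_mem_Fpos hp).not_ge hm.2.1

lemma max_norm_sub_pos_of_ne {E : Type*} [NormedAddCommGroup E] (x : E) {y z : E}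
    (h : y ≠ z) : 0 < max ‖x - y‖ ‖x - z‖ := by
  by_contra! hle
  have hy : x = y := sub_eq_zero.mp (norm_le_zero_iff.mp ((le_max_left _ _).trans hle))
  have hz : x = z := sub_eq_zero.mp (norm_le_zero_iff.mp ((le_max_right _ _).trans hle))
  exact h (hy.symm.trans hz)

lemma neg_inv_mem_Fneg {ε : ℝ} (hε : 0 < ε) : !₂[-ε, ε⁻¹] ∈ Fneg := by
  refine ⟨?_, ?_, ?_⟩ <;> simp [hε.ne', hε.le]

lemma inv_mem_Fpos {ε : ℝ} (hε : 0 < ε) : !₂[ε, ε⁻¹] ∈ Fpos := by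
  refine ⟨?_, ?_, ?_⟩ <;> simp [hε.ne', hε.le]

lemma exists_solution_with_values {ε : ℝ} (hε : 0 < ε) :
    ∃ x ym yp : EuclideanSpace ℝ (Fin 2), ym ∈ Fneg ∧ yp ∈ Fpos ∧
      max |ym 0| |yp 0| = ε ∧ max ‖x - ym‖ ‖x - yp‖ = ε := by
  refine ⟨!₂[0, ε⁻¹], !₂[-ε, ε⁻¹], !₂[ε, ε⁻¹], neg_inv_mem_Fneg hε, inv_mem_Fpos hε, ?_, ?_⟩
  · simp [abs_of_pos hε]
  · simp only [norm_sub_of_eq_snd, zero_sub, sub_neg_eq_add, zero_add, abs_neg,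
      abs_of_pos hε, max_self]

lemma exists_strict_improvement (x : EuclideanSpace ℝ (Fin 2)) {ym yp : EuclideanSpace ℝ (Fin 2)}
    (hm : ym ∈ Fneg) (hp : yp ∈ Fpos) :
    ∃ x' ym' yp' : EuclideanSpace ℝ (Fin 2), ym' ∈ Fneg ∧ yp' ∈ Fpos ∧
      max |ym' 0| |yp' 0| < max |ym 0| |yp 0| ∧
      max ‖x' - ym'‖ ‖x' - yp'‖ < max ‖x - ym‖ ‖x - yp‖ := by
  have hA : 0 < max |ym 0| |yp 0| :=
    (abs_pos.mpr (pos_of_mem_Fpos hp).ne').trans_le (le_max_right _ _)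
  have hB : 0 < max ‖x - ym‖ ‖x - yp‖ :=
    max_norm_sub_pos_of_ne x (disjoint_Fneg_Fpos.ne_of_mem hm hp)
  obtain ⟨ε, hε, hεAB⟩ := exists_between (lt_min hA hB)
  obtain ⟨hεA, hεB⟩ := lt_min_iff.mp hεAB
  obtain ⟨x', ym', yp', hm', hp', hval, hdist⟩ := exists_solution_with_values hε
  exact ⟨x', ym', yp', hm', hp', hval ▸ hεA, hdist ▸ hεB⟩

theorem stmt16 :
    (∀ (x : EuclideanSpace ℝ (Fin 2)) (ym yp : EuclideanSpace ℝ (Fin 2)),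
      ym ∈ Fneg → yp ∈ Fpos →
        ∃ (x' ym' yp' : EuclideanSpace ℝ (Fin 2)), ym' ∈ Fneg ∧ yp' ∈ Fpos ∧
          max |ym' 0| |yp' 0| < max |ym 0| |yp 0| ∧
          max ‖x' - ym'‖ ‖x' - yp'‖ < max ‖x - ym‖ ‖x - yp‖) ∧
    ¬ ∃ (x : EuclideanSpace ℝ (Fin 2)) (ym yp : EuclideanSpace ℝ (Fin 2)),
        ym ∈ Fneg ∧ yp ∈ Fpos ∧
        ¬ ∃ (x' ym' yp' : EuclideanSpace ℝ (Fin 2)), ym' ∈ Fneg ∧ yp' ∈ Fpos ∧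
            max |ym' 0| |yp' 0| < max |ym 0| |yp 0| ∧
            max ‖x' - ym'‖ ‖x' - yp'‖ < max ‖x - ym‖ ‖x - yp‖ :=
  ⟨fun x _ _ hm hp => exists_strict_improvement x hm hp,
    fun ⟨x, _, _, hm, hp, h⟩ => h (exists_strict_improvement x hm hp)⟩
end

section
/- For each ξ₂ ∈ [1, ∞), let G₋(ξ₂) = [−1, −1 + 1/ξ₂] ⊆ ℝ and G₊(ξ₂) = [1 − 1/ξ₂, 1] ⊆ ℝ. Then the supremum over all these sets of the distance from the point 0 equals 1, i.e. sup { d(0, S) : S = G₋(ξ₂) or S = G₊(ξ₂) for some ξ₂ ∈ [1, ∞) } = 1, where d(0, S) = inf_{y ∈ S} |y|; but no set in this family attains the supremum: d(0, G₋(ξ₂)) = d(0, G₊(ξ₂)) = 1 − 1/ξ₂ < 1 for every ξ₂ ∈ [1, ∞). -/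
/-! Each interval lies on one side of `0`, so the distance is that to the nearer endpoint,
`1 - 1/ξ₂`. As `ξ₂` ranges over `[1, ∞)` these values fill out `[0, 1)`, whose supremum `1`
is not attained. -/

open Metric Set

theorem Metric.infDist_eq_dist_of_forall_dist_le {α : Type*} [PseudoMetricSpace α] {x y : α}
    {s : Set α} (hy : y ∈ s) (hmin : ∀ z ∈ s, dist x y ≤ dist x z) :
    infDist x s = dist x y :=
  le_antisymm (infDist_le_dist_of_mem hy) ((le_infDist ⟨y, hy⟩).2 hmin)

namespace Real

variable {x a b : ℝ}

theorem infDist_Icc_of_le_left (hxa : x ≤ a) (hab : a ≤ b) : infDist x (Icc a b) = a - x := by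
  rw [infDist_eq_dist_of_forall_dist_le (left_mem_Icc.2 hab)]
  · rw [Real.dist_eq, abs_of_nonpos (by linarith)]
    ring
  · intro z hz
    rw [Real.dist_eq, Real.dist_eq, abs_of_nonpos (by linarith),
      abs_of_nonpos (by linarith [hz.1])]
    linarith [hz.1]

theorem infDist_Icc_of_right_le (hbx : b ≤ x) (hab : a ≤ b) : infDist x (Icc a b) = x - b := by
  rw [infDist_eq_dist_of_forall_dist_le (right_mem_Icc.2 hab)]
  · rw [Real.dist_eq, abs_of_nonneg (by linarith)]
  · intro z hz
    rw [Real.dist_eq, Real.dist_eq, abs_of_nonneg (by linarith),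
      abs_of_nonneg (by linarith [hz.2])]
    linarith [hz.2]

end Real

theorem one_div_mem_Ioc_of_one_le {K : Type*} [Field K] [LinearOrder K] [IsStrictOrderedRing K]
    {ξ : K} (hξ : 1 ≤ ξ) : 1 / ξ ∈ Ioc 0 1 :=
  ⟨one_div_pos.2 (zero_lt_one.trans_le hξ), div_le_one_of_le₀ hξ (zero_le_one.trans hξ)⟩

theorem image_one_sub_one_div_Ici_one : (fun ξ : ℝ => 1 - 1 / ξ) '' Ici 1 = Ico 0 1 := by
  ext t
  constructor
  · rintro ⟨ξ, hξ, rfl⟩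
    have hξ := one_div_mem_Ioc_of_one_le (mem_Ici.1 hξ)
    exact ⟨by linarith [hξ.2], by linarith [hξ.1]⟩
  · rintro ⟨ht₀, ht₁⟩
    refine ⟨1 / (1 - t), ?_, by field_simp; ring⟩
    rw [mem_Ici, le_div_iff₀ (by linarith)]
    linarith

theorem stmt17 :
    sSup {t : ℝ | ∃ ξ₂ : ℝ, 1 ≤ ξ₂ ∧
        (t = Metric.infDist (0 : ℝ) (Set.Icc (-1) (-1 + 1 / ξ₂)) ∨
          t = Metric.infDist (0 : ℝ) (Set.Icc (1 - 1 / ξ₂) 1))} = 1 ∧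
      ∀ ξ₂ : ℝ, 1 ≤ ξ₂ →
        Metric.infDist (0 : ℝ) (Set.Icc (-1) (-1 + 1 / ξ₂)) = 1 - 1 / ξ₂ ∧
        Metric.infDist (0 : ℝ) (Set.Icc (1 - 1 / ξ₂) 1) = 1 - 1 / ξ₂ ∧
        1 - 1 / ξ₂ < 1 := by
  have hdist : ∀ ξ : ℝ, 1 ≤ ξ →
      infDist (0 : ℝ) (Icc (-1) (-1 + 1 / ξ)) = 1 - 1 / ξ ∧
      infDist (0 : ℝ) (Icc (1 - 1 / ξ) 1) = 1 - 1 / ξ ∧ 1 - 1 / ξ < 1 := by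
    intro ξ hξ
    have hinv := one_div_mem_Ioc_of_one_le hξ
    refine ⟨?_, ?_, by linarith [hinv.1]⟩
    · rw [Real.infDist_Icc_of_right_le (by linarith [hinv.2]) (by linarith [hinv.1])]
      ring
    · rw [Real.infDist_Icc_of_le_left (by linarith [hinv.2]) (by linarith [hinv.1])]
      ring
  have hfamily : {t : ℝ | ∃ ξ₂ : ℝ, 1 ≤ ξ₂ ∧
      (t = infDist (0 : ℝ) (Icc (-1) (-1 + 1 / ξ₂)) ∨
        t = infDist (0 : ℝ) (Icc (1 - 1 / ξ₂) 1))} =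
      (fun ξ : ℝ => 1 - 1 / ξ) '' Ici 1 := by
    ext t
    refine ⟨fun ⟨ξ, hξ, ht⟩ => ⟨ξ, hξ, ?_⟩,
      fun ⟨ξ, hξ, ht⟩ => ⟨ξ, hξ, Or.inr ?_⟩⟩
    · rcases ht with rfl | rfl
      exacts [(hdist ξ hξ).1.symm, (hdist ξ hξ).2.1.symm]
    · rw [← ht, (hdist ξ hξ).2.1]
  rw [hfamily, image_one_sub_one_div_Ici_one, csSup_Ico one_pos]
  exact ⟨rfl, hdist⟩
end
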